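/- Let V = F_3^5 with quadratic form q(a) = a_0^2 - a_1^2 - ... - a_4^2. The complex span of the 270 functions C : V → C associated to signed crosses (as in the construction: C_α = sign of ∏_i b(α,a_i), for {a_0,...,a_4} an orthogonal basis with one long and four short vectors) has dimension exactly 10. -/
import Mathlib

abbrev V : Type := Fin 5 → ZMod 3

def q (a : V) : ZMod 3 := a 0 ^ 2 - a 1 ^ 2 - a 2 ^ 2 - a 3 ^ 2 - a 4 ^ 2

def b (x y : V) : ZMod 3 := x 0 * y 0 - x 1 * y 1 - x 2 * y 2 - x 3 * y 3 - x 4 * y 4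

noncomputable def sgn (t : ZMod 3) : ℂ := if t = 1 then 1 else if t = 0 then 0 else -1

def crossFunctions : Set (V → ℂ) :=
  {C | ∃ a : Fin 5 → V, (∀ i j, i ≠ j → b (a i) (a j) = 0) ∧ q (a 0) = 1 ∧
    (∀ i, i ≠ 0 → q (a i) = -1) ∧ C = fun α => sgn (∏ i, b α (a i))}

/-! ### auxiliary definitions -/

def sgnZ (t : ZMod 3) : ℤ := if t = 1 then 1 else if t = 0 then 0 else -1

def zs : Fin 40 → V := ![![1,0,0,1,0], ![1,2,0,0,0], ![1,2,1,1,1], ![1,0,1,0,0], ![1,2,2,1,2], ![1,1,2,1,1], ![0,1,0,2,2], ![0,0,1,2,2], ![0,1,0,1,1], ![1,2,1,2,1], ![0,0,1,1,1], ![0,0,1,1,2], ![0,0,1,2,1], ![0,1,0,1,2], ![0,1,0,2,1], ![0,1,1,0,1], ![0,1,1,0,2], ![0,1,1,1,0], ![0,1,1,2,0], ![0,1,2,0,1], ![0,1,2,0,2], ![0,1,2,1,0], ![0,1,2,2,0], ![1,0,0,0,1], ![1,0,0,0,2], ![1,0,0,2,0], ![1,0,2,0,0], ![1,1,0,0,0],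 ![1,1,1,1,1], ![1,1,1,1,2], ![1,1,1,2,1], ![1,1,1,2,2], ![1,1,2,1,2], ![1,1,2,2,1], ![1,1,2,2,2], ![1,2,1,1,2], ![1,2,1,2,2], ![1,2,2,1,1], ![1,2,2,2,1], ![1,2,2,2,2]]

def bs : Fin 30 → V := ![![0,0,2,1,0], ![1,1,1,0,2], ![2,2,2,0,0], ![2,0,0,1,2], ![1,2,1,1,0], ![1,2,1,0,0], ![1,1,2,0,2], ![2,2,0,1,1], ![0,1,0,2,0], ![0,2,0,2,0], ![2,1,2,1,0], ![2,2,0,0,2], ![2,0,1,1,0], ![2,1,0,1,1], ![2,0,0,1,1], ![1,0,1,1,2], ![2,1,2,0,2], ![1,0,2,1,1], ![2,2,1,0,2], ![1,1,2,2,0], ![2,2,2,1,0], ![0,2,2,1,1], ![0,0,1,0,2], ![0,1,2,0,0], ![0,1,1,1,2], ![2,2,0,2,0], ![0,1,2,2,1], ![2,0,2,1,1], ![1,2,0,1,0], ![1,1,0,0,2]]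

def Ncert : Fin 40 → Fin 40 → ℤ := ![![0,0,0,0,0,0,0,0,0,0,0,0,0,0,0,0,0,0,0,0,0,0,0,0,0,0,0,0,0,0,1,0,0,0,0,0,0,0,0,0], ![0,0,0,0,0,0,0,0,0,0,0,0,0,0,0,0,0,0,0,0,0,0,0,0,0,0,0,0,0,0,0,1,0,0,0,0,0,0,0,0], ![0,0,0,0,0,0,0,0,0,0,0,0,0,0,0,0,0,0,0,0,0,0,0,0,0,0,0,0,0,0,0,0,1,0,0,0,0,0,0,0], ![0,0,0,0,0,0,0,0,0,0,0,0,0,0,0,0,0,0,0,0,0,0,0,0,0,0,0,0,0,0,0,0,0,1,0,0,0,0,0,0], ![0,0,0,0,0,0,0,0,0,0,0,0,0,0,0,0,0,0,0,0,0,0,0,0,0,0,0,0,0,0,0,0,0,0,1,0,0,0,0,0], ![0,0,0,0,0,0,0,0,0,0,0,0,0,0,0,0,0,0,0,0,0,0,0,0,0,0,0,0,0,0,0,0,0,0,0,1,0,0,0,0], ![0,0,0,0,0,0,0,0,0,0,0,0,0,0,0,0,0,0,0,0,0,0,0,0,0,0,0,0,0,0,0,0,0,0,0,0,1,0,0,0],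 ![0,0,0,0,0,0,0,0,0,0,0,0,0,0,0,0,0,0,0,0,0,0,0,0,0,0,0,0,0,0,0,0,0,0,0,0,0,1,0,0], ![0,0,0,0,0,0,0,0,0,0,0,0,0,0,0,0,0,0,0,0,0,0,0,0,0,0,0,0,0,0,0,0,0,0,0,0,0,0,1,0], ![0,0,0,0,0,0,0,0,0,0,0,0,0,0,0,0,0,0,0,0,0,0,0,0,0,0,0,0,0,0,0,0,0,0,0,0,0,0,0,1], ![-2,-1,0,-2,0,-1,0,0,0,0,-2,-2,0,1,1,1,3,-2,-1,-1,-2,-1,-3,0,1,2,1,2,-2,0,0,0,0,0,0,0,-3,3,3,0], ![3,2,0,2,0,0,0,0,1,0,2,2,0,0,0,-1,-3,2,2,1,2,1,3,-1,-1,-2,-1,-1,2,1,-3,3,-3,0,0,3,0,0,-3,0], ![6,3,1,4,0,0,0,1,1,0,4,4,0,-1,-1,-2,-6,3,3,2,4,2,5,0,-1,-5,-3,-5,5,1,3,0,0,-3,0,0,0,-3,0,0], ![4,2,0,3,-1,-1,0,1,1,-1,3,2,0,0,1,-1,-3,2,2,1,2,1,3,-1,-1,-3,-1,-2,3,1,-3,3,0,0,0,0,0,0,-3,0],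 ![3,1,0,2,-1,-1,-1,1,1,-1,2,1,0,-1,0,-1,-2,1,1,1,1,1,2,0,-1,-2,-1,-2,2,0,3,0,3,-3,0,-3,0,-3,0,0], ![6,2,0,5,0,0,0,1,1,-1,5,4,1,0,-1,-3,-6,4,3,1,4,3,6,-1,-1,-5,-2,-6,6,1,0,0,0,-3,0,-3,3,-3,0,-3], ![4,2,0,2,-1,-1,0,0,1,0,2,2,0,0,1,0,-2,1,2,1,1,0,2,-1,0,-2,-1,-1,2,1,0,3,0,0,0,3,-3,3,0,3], ![4,2,0,3,0,0,0,0,1,-1,3,3,1,1,0,-2,-4,3,2,1,3,2,4,-2,-1,-3,-1,-3,4,1,-3,3,-3,0,3,0,0,0,-3,0], ![3,1,-1,2,-2,-2,-1,1,1,-1,2,1,0,-1,1,0,-1,0,2,0,0,0,1,0,0,-2,-1,-1,1,0,3,0,3,-3,-3,0,0,0,3,0], ![5,3,0,3,-1,-1,0,1,1,0,3,3,0,-1,0,-1,-3,2,3,2,2,0,3,0,0,-3,-2,-3,3,1,3,0,3,0,0,0,-3,0,3,3], ![-9,-5,-1,-5,0,0,-1,-1,-2,-1,-5,-6,0,1,1,2,7,-4,-5,-3,-5,-1,-6,1,0,6,4,6,-6,-2,-3,0,0,0,0,-3,6,-3,-3,-3],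 ![-4,-2,-1,-3,-1,-1,0,0,-1,0,-3,-3,0,0,1,2,5,-3,-2,-2,-4,-2,-4,1,1,3,2,4,-4,-1,0,0,3,0,-3,0,0,0,3,0], ![2,1,1,2,1,1,0,0,0,0,2,2,0,0,-1,-2,-3,2,0,1,3,2,3,0,-1,-2,-1,-3,3,0,0,0,0,0,3,-3,3,-3,-3,0], ![0,0,0,0,0,0,0,0,0,0,0,0,0,1,1,0,0,0,0,0,0,0,0,-1,0,0,0,1,0,0,-3,3,-3,3,0,3,0,3,-3,0], ![-6,-2,0,-5,1,0,0,-1,-1,1,-5,-4,-1,0,0,2,6,-4,-3,-1,-4,-2,-6,1,1,5,2,5,-5,-1,3,0,0,0,0,0,-3,0,3,0], ![-4,-1,0,-3,1,1,1,-1,-1,1,-3,-2,0,1,0,1,3,-2,-2,-1,-2,-1,-3,0,1,3,1,3,-3,0,-3,3,-3,3,0,3,-3,3,0,0], ![-2,-1,0,-2,0,-1,0,-1,0,0,-2,-2,0,1,1,1,3,-2,-1,-1,-2,-1,-3,-1,1,2,1,3,-2,0,0,3,-3,0,0,3,-3,3,0,0], ![0,1,1,-1,1,1,1,0,0,2,0,1,-1,0,-1,0,-1,0,0,1,1,0,0,0,0,0,-1,0,0,0,0,0,-3,3,0,3,-3,3,0,0],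 ![0,0,0,0,1,1,0,0,0,0,1,1,0,0,-1,-1,-1,1,0,0,1,1,1,0,0,0,0,-1,1,0,0,-3,0,0,0,-3,3,0,0,0], ![1,1,1,1,1,1,0,0,0,0,1,1,0,0,-1,-1,-2,1,0,1,2,1,2,0,-1,-1,-1,-2,2,0,0,0,0,0,3,0,0,-3,-3,0], ![0,0,0,1,0,1,0,0,0,0,1,1,0,0,-1,-1,-2,1,0,0,1,1,2,0,-1,-1,0,-1,1,0,-3,0,0,0,0,0,3,-3,-3,-3], ![-2,-1,-1,-2,-1,-1,0,0,0,0,-2,-2,0,0,1,2,4,-2,0,-1,-3,-2,-3,1,2,2,1,2,-3,0,3,-3,3,0,-3,0,-3,3,6,3], ![1,0,-1,0,-2,-2,-1,1,1,-1,0,-1,-1,-1,1,1,1,-1,1,0,-1,-1,-1,1,0,0,0,1,-1,0,3,-3,3,-3,-3,-3,0,0,3,0], ![2,1,0,1,0,0,0,0,1,0,1,1,0,0,0,0,-1,1,1,1,1,0,1,0,0,-1,-1,-1,1,1,0,0,0,0,0,0,-3,3,0,3], ![1,1,1,1,2,2,1,0,0,1,2,2,0,0,-2,-2,-4,2,0,1,3,2,3,0,-1,-2,-1,-3,3,0,-3,0,-3,0,3,0,3,-3,-3,-3],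 ![1,0,-1,1,-1,-1,-1,1,0,-1,1,0,0,-1,0,0,0,0,1,0,0,0,1,1,0,-1,0,-1,0,0,3,-3,3,-3,-3,-3,3,-3,3,0], ![-1,0,0,0,1,1,0,0,0,0,0,0,0,0,-1,-1,-1,1,-1,0,1,1,1,0,-1,0,0,-1,1,0,-3,0,0,0,3,-3,3,-3,-3,-3], ![1,0,0,1,0,0,-1,0,0,-1,1,0,0,0,0,-1,-1,1,0,0,1,1,1,0,-1,-1,0,-1,1,0,0,0,0,-3,0,-3,3,-3,-3,0], ![-8,-4,0,-5,1,1,0,-1,-2,1,-5,-5,0,1,0,2,6,-4,-5,-3,-4,-1,-6,1,1,5,3,5,-5,-2,-3,0,0,0,0,0,3,0,0,-3], ![10,5,0,6,-2,-1,0,2,2,0,6,6,0,-2,0,-2,-7,4,6,3,5,1,7,0,-1,-7,-4,-6,6,2,3,0,3,-3,-3,0,-3,0,3,3]]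

def dcert : Fin 40 → ℤ := ![1,1,1,1,1,1,1,1,1,1,3,3,3,3,3,3,3,3,3,3,3,3,3,3,3,3,3,3,3,3,3,3,3,3,3,3,3,3,3,3]

def as : Fin 10 → Fin 5 → V := ![![![0,0,0,1,1], ![0,2,1,2,1], ![1,1,1,0,0], ![0,2,1,1,2], ![1,2,2,0,0]], ![![2,2,0,1,1], ![0,2,2,1,1], ![1,0,2,2,0], ![2,2,1,0,0], ![2,0,1,0,1]], ![![1,1,0,2,2], ![2,1,0,0,2], ![2,0,0,2,2], ![2,1,0,2,0], ![0,0,2,0,0]], ![![1,0,0,0,0], ![0,2,2,2,2], ![0,2,1,1,2], ![0,2,2,1,1], ![0,1,2,1,2]], ![![0,0,0,2,1], ![1,0,0,1,1], ![0,0,1,0,0], ![2,0,0,1,1], ![0,2,0,0,0]], ![![0,2,0,0,2], ![1,0,2,1,0], ![0,2,1,1,1], ![1,0,1,2,0], ![0,2,2,2,1]], ![![2,2,1,1,0], ![0,2,1,1,2], ![2,0,1,0,1], ![2,0,0,1,1], ![2,2,0,0,1]], ![![2,2,2,0,1], ![2,1,0,0,2], ![2,0,1,0,2], ![0,0,0,1,0],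 ![2,1,1,0,0]], ![![0,1,1,0,0], ![2,1,2,0,0], ![0,0,0,1,0], ![1,1,2,0,0], ![0,0,0,0,2]], ![![1,1,0,1,2], ![0,0,1,0,0], ![1,2,0,2,0], ![1,0,0,2,1], ![2,1,0,0,2]]]

def Bcert : Fin 10 → Fin 10 → ℤ := ![![3,-2,3,-1,-2,-1,-2,1,3,2], ![-1,1,0,-1,1,-2,2,-1,-2,-1], ![-3,3,-2,1,1,2,0,1,-2,-1], ![-2,1,-1,0,1,0,2,-1,-2,-1], ![1,-1,1,-1,-1,-1,0,0,1,0], ![-2,1,-2,1,1,1,1,0,-2,-1], ![7,-5,6,-3,-3,-4,-4,1,6,3], ![0,0,1,0,-1,0,-1,1,1,1], ![1,-1,2,-1,-1,-2,0,1,2,1], ![1,-1,2,1,-1,0,-2,1,2,1]]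

def ecert : Fin 10 → ℤ := ![1,2,2,1,1,1,2,1,2,2]

def pt (i : Fin 10) : Fin 40 := ⟨i.1, by omega⟩

def rr (β : V) (j : Fin 40) : ℤ :=
  (if b (zs j) β = 1 then 1 else 0) - (if b (zs j) β = 2 then 1 else 0)

def Rmat (k : Fin 40) (j : Fin 40) : ℤ :=
  if h : (k : ℕ) < 30 then rr (bs ⟨k.1, h⟩) j else (if (j : ℕ) = (k : ℕ) - 30 then 1 else 0)

def Az (i j : Fin 10) : ℤ := sgnZ (∏ l, b (zs (pt j)) (as i l))

/-! ### small lemmas -/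

lemma sgn_eq (t : ZMod 3) : sgn t = ((sgnZ t : ℤ) : ℂ) := by
  simp only [sgn, sgnZ, apply_ite (fun z : ℤ => (z : ℂ)), Int.cast_one, Int.cast_zero,
    Int.cast_neg]

lemma b_symm (x y : V) : b x y = b y x := by simp only [b]; ring

lemma b_self (x : V) : b x x = q x := by simp only [b, q]; ring

lemma b_neg_left (x y : V) : b (-x) y = - b x y := by
  simp only [b, Pi.neg_apply]; ring

lemma b_zero_left (y : V) : b 0 y = 0 := by
  simp only [b, Pi.zero_apply]; ring

lemma sgnZ_neg : ∀ t : ZMod 3, sgnZ (-t) = - sgnZ t := by decide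

lemma sgn_neg (t : ZMod 3) : sgn (-t) = - sgn t := by
  rw [sgn_eq, sgn_eq, sgnZ_neg, Int.cast_neg]

lemma zmod3cases : ∀ t : ZMod 3, t = 0 ∨ t = 1 ∨ t = 2 := by decide

lemma sgn_zero : sgn 0 = 0 := by simp [sgn]

def phi (a : Fin 5 → V) (c : Fin 5 → ZMod 3) : V := fun k => ∑ i, c i * a i k

lemma b_phi (a : Fin 5 → V) (c : Fin 5 → ZMod 3) (y : V) :
    b (phi a c) y = ∑ i, c i * b (a i) y := by
  simp only [phi, b, Fin.sum_univ_five]; ring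

/-! ### the submodule cut out by the linear conditions -/

noncomputable def WSub : Submodule ℂ (V → ℂ) where
  carrier := {f | (∀ α, f (-α) = - f α) ∧ (∀ α, q α ≠ 0 → f α = 0) ∧
    (∀ β, q β ≠ 0 → ∑ α ∈ Finset.univ.filter (fun α => b α β = 1), f α = 0)}
  add_mem' := by
    rintro f g ⟨f1, f2, f3⟩ ⟨g1, g2, g3⟩
    refine ⟨fun α => ?_, fun α h => ?_, fun β h => ?_⟩
    · simp only [Pi.add_apply, f1, g1]; ring
    · simp only [Pi.add_apply, f2 α h, g2 α h, add_zero]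
    · simp only [Pi.add_apply, Finset.sum_add_distrib, f3 β h, g3 β h, add_zero]
  zero_mem' := by
    refine ⟨fun α => ?_, fun α h => rfl, fun β h => ?_⟩
    · simp
    · simp
  smul_mem' := by
    rintro c f ⟨f1, f2, f3⟩
    refine ⟨fun α => ?_, fun α h => ?_, fun β h => ?_⟩
    · simp only [Pi.smul_apply, f1, smul_eq_mul]; ring
    · simp only [Pi.smul_apply, f2 α h, smul_eq_mul, mul_zero]
    · simp only [Pi.smul_apply, smul_eq_mul, ← Finset.mul_sum, f3 β h, mul_zero]

/-! ### combinatorial facts (decidable) -/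

lemma L1 : ∀ c0 c1 c2 c3 c4 : ZMod 3,
    c0 ^ 2 - c1 ^ 2 - c2 ^ 2 - c3 ^ 2 - c4 ^ 2 ≠ 0 → c0 * c1 * c2 * c3 * c4 = 0 := by decide

set_option maxRecDepth 100000 in
set_option maxHeartbeats 8000000 in
lemma L2 : ∀ u0 u1 u2 u3 u4 : ZMod 3, u0 ^ 2 - u1 ^ 2 - u2 ^ 2 - u3 ^ 2 - u4 ^ 2 ≠ 0 →
    (Finset.univ.sum fun c : Fin 5 → ZMod 3 =>
      if c 0 * u0 + c 1 * u1 + c 2 * u2 + c 3 * u3 + c 4 * u4 = 1 then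
        sgnZ (c 0 * c 1 * c 2 * c 3 * c 4) else 0) = (0 : ℤ) := by decide

/-! ### every cross function satisfies the conditions -/

theorem cross_mem {C : V → ℂ} (hC : C ∈ crossFunctions) : C ∈ WSub := by
  obtain ⟨a, horth, hq0, hqi, rfl⟩ := hC
  have bphia : ∀ (c : Fin 5 → ZMod 3) (j : Fin 5), b (phi a c) (a j) = c j * q (a j) := by
    intro c j
    rw [b_phi, Finset.sum_eq_single j]
    · rw [b_self]
    · intro i _ hij; rw [horth i j hij, mul_zero]
    · intro h; exact absurd (Finset.mem_univ j) h
  have qa_ne : ∀ j, q (a j) ≠ 0 := by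
    intro j
    by_cases hj : j = 0
    · rw [hj, hq0]; decide
    · rw [hqi j hj]; decide
  have hinj : Function.Injective (phi a) := by
    intro c c' h
    funext j
    have h2 : b (phi a c) (a j) = b (phi a c') (a j) := by rw [h]
    rw [bphia, bphia] at h2
    exact mul_right_cancel₀ (qa_ne j) h2
  have hbij : Function.Bijective (phi a) := Finite.injective_iff_bijective.mp hinj
  have qphi : ∀ c : Fin 5 → ZMod 3,
      q (phi a c) = c 0 ^ 2 - c 1 ^ 2 - c 2 ^ 2 - c 3 ^ 2 - c 4 ^ 2 := by
    intro c
    have e : ∀ i, b (a i) (phi a c) = c i * q (a i) := fun i => (b_symm _ _).trans (bphia c i)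
    rw [← b_self, b_phi, Fin.sum_univ_five, e 0, e 1, e 2, e 3, e 4, hq0,
      hqi 1 (by decide), hqi 2 (by decide), hqi 3 (by decide), hqi 4 (by decide)]
    ring
  have prodphi : ∀ c : Fin 5 → ZMod 3,
      (∏ i, b (phi a c) (a i)) = c 0 * c 1 * c 2 * c 3 * c 4 := by
    intro c
    rw [Fin.prod_univ_five, bphia, bphia, bphia, bphia, bphia, hq0,
      hqi 1 (by decide), hqi 2 (by decide), hqi 3 (by decide), hqi 4 (by decide)]
    ring
  refine ⟨fun α => ?_, fun α hq => ?_, fun β hq => ?_⟩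
  · show sgn (∏ i, b (-α) (a i)) = - sgn (∏ i, b α (a i))
    have : (∏ i, b (-α) (a i)) = -(∏ i, b α (a i)) := by
      rw [Fin.prod_univ_five, Fin.prod_univ_five, b_neg_left, b_neg_left, b_neg_left,
        b_neg_left, b_neg_left]
      ring
    rw [this, sgn_neg]
  · obtain ⟨c, rfl⟩ := hbij.2 α
    show sgn (∏ i, b (phi a c) (a i)) = 0
    rw [qphi] at hq
    rw [prodphi, L1 _ _ _ _ _ hq, sgn_zero]
  · obtain ⟨d, rfl⟩ := hbij.2 β
    have hu : ∀ i, b (a i) (phi a d) = d i * q (a i) :=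
      fun i => (b_symm _ _).trans (bphia d i)
    have hL2hyp : (b (a 0) (phi a d)) ^ 2 - (b (a 1) (phi a d)) ^ 2 - (b (a 2) (phi a d)) ^ 2
        - (b (a 3) (phi a d)) ^ 2 - (b (a 4) (phi a d)) ^ 2 ≠ 0 := by
      rw [hu 0, hu 1, hu 2, hu 3, hu 4, hq0, hqi 1 (by decide), hqi 2 (by decide),
        hqi 3 (by decide), hqi 4 (by decide)]
      rw [qphi] at hq
      intro hcon
      apply hq
      rw [← hcon]; ring
    rw [Finset.sum_filter]
    have step : (∑ α : V, if b α (phi a d) = 1 then sgn (∏ i, b α (a i)) else 0)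
        = ∑ c : Fin 5 → ZMod 3,
            if b (phi a c) (phi a d) = 1 then sgn (∏ i, b (phi a c) (a i)) else 0 :=
      (Fintype.sum_bijective (phi a) hbij _ _ (fun c => rfl)).symm
    rw [step]
    have term : ∀ c : Fin 5 → ZMod 3,
        (if b (phi a c) (phi a d) = 1 then sgn (∏ i, b (phi a c) (a i)) else 0)
        = (((if c 0 * b (a 0) (phi a d) + c 1 * b (a 1) (phi a d) + c 2 * b (a 2) (phi a d)
            + c 3 * b (a 3) (phi a d) + c 4 * b (a 4) (phi a d) = 1 then
            sgnZ (c 0 * c 1 * c 2 * c 3 * c 4) else 0 : ℤ) : ℂ)) := by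
      intro c
      rw [prodphi, sgn_eq, b_phi, Fin.sum_univ_five]
      rw [apply_ite (fun z : ℤ => (z : ℂ)), Int.cast_zero]
    rw [Finset.sum_congr rfl (fun c _ => term c), ← Int.cast_sum,
      L2 _ _ _ _ _ hL2hyp, Int.cast_zero]

/-! ### decidable facts about the explicit data -/

set_option maxRecDepth 100000

lemma zcover : ∀ α : V, q α = 0 → α = 0 ∨ ∃ j : Fin 40, zs j = α ∨ zs j = -α := by decide

lemma zs_inj : ∀ j j' : Fin 40, zs j = zs j' → j = j' := by decide

lemma zs_nn : ∀ j j' : Fin 40, zs j ≠ - zs j' := by decide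

lemma qbs : ∀ k : Fin 30, q (bs k) ≠ 0 := by decide

set_option maxRecDepth 100000 in
set_option maxHeartbeats 8000000 in
lemma cert1 : ∀ j0 j : Fin 40,
    (∑ k : Fin 40, Ncert j0 k * Rmat k j) = if j = j0 then dcert j0 else 0 := by decide

lemma dcert_ne : ∀ j0 : Fin 40, dcert j0 ≠ 0 := by decide

lemma ifcomb (t : ZMod 3) (x : ℂ) :
    (if t = 1 then x else 0) + (if -t = 1 then -x else 0)
    = (((if t = 1 then (1 : ℤ) else 0) - (if t = 2 then 1 else 0) : ℤ) : ℂ) * x := by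
  rcases zmod3cases t with rfl | rfl | rfl
  · have e1 : ¬((0 : ZMod 3) = 1) := by decide
    have e2 : ¬(-(0 : ZMod 3) = 1) := by decide
    have e3 : ¬((0 : ZMod 3) = 2) := by decide
    simp only [if_neg e1, if_neg e2, if_neg e3]
    push_cast; ring
  · have e1 : ((1 : ZMod 3) = 1) := rfl
    have e2 : ¬(-(1 : ZMod 3) = 1) := by decide
    have e3 : ¬((1 : ZMod 3) = 2) := by decide
    simp only [if_pos e1, if_neg e2, if_neg e3]
    push_cast; ring
  · have e1 : ¬((2 : ZMod 3) = 1) := by decide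
    have e2 : (-(2 : ZMod 3) = 1) := by decide
    have e3 : ((2 : ZMod 3) = 2) := rfl
    simp only [if_neg e1, if_pos e2, if_pos e3]
    push_cast; ring

/-! ### uniqueness: a function in WSub vanishing at the 10 points is zero -/

theorem Wuniq (f : V → ℂ) (hf : f ∈ WSub) (hvan : ∀ i : Fin 10, f (zs (pt i)) = 0) :
    f = 0 := by
  obtain ⟨hodd, hsupp, hrow⟩ := hf
  have f0 : f 0 = 0 := by
    have h := hodd 0
    rw [neg_zero] at h
    linear_combination h / 2
  -- conversion of the filtered sums to sums over the 40 points
  have conv : ∀ β : V, (∑ α ∈ Finset.univ.filter (fun α => b α β = 1), f α)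
      = ∑ j : Fin 40, ((rr β j : ℤ) : ℂ) * f (zs j) := by
    intro β
    classical
    rw [Finset.sum_filter]
    set ZZ : Finset V :=
      (Finset.univ.image zs) ∪ (Finset.univ.image (fun j => - zs j)) with hZZ
    have hvanish : ∀ α ∈ (Finset.univ : Finset V), α ∉ ZZ →
        (if b α β = 1 then f α else 0) = 0 := by
      intro α _ hα
      by_cases hq : q α = 0
      · rcases zcover α hq with h | ⟨j, h | h⟩
        · subst h
          rw [b_zero_left, if_neg (by decide)]
        · exact absurd (Finset.mem_union_left _
            (Finset.mem_image.mpr ⟨j, Finset.mem_univ j, h⟩)) hα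
        · have : α = - zs j := by rw [h, neg_neg]
          exact absurd (Finset.mem_union_right _
            (Finset.mem_image.mpr ⟨j, Finset.mem_univ j, this.symm⟩)) hα
      · rw [hsupp α hq, ite_self]
    rw [← Finset.sum_subset (Finset.subset_univ ZZ) hvanish]
    have hdisj : Disjoint (Finset.univ.image zs)
        (Finset.univ.image (fun j : Fin 40 => - zs j)) := by
      rw [Finset.disjoint_left]
      rintro x hx hx'
      obtain ⟨j, _, rfl⟩ := Finset.mem_image.mp hx
      obtain ⟨j', _, hj'⟩ := Finset.mem_image.mp hx'
      exact zs_nn j j' hj'.symm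
    rw [hZZ, Finset.sum_union hdisj,
      Finset.sum_image (fun j _ j' _ h => zs_inj j j' h),
      Finset.sum_image (fun j _ j' _ h => zs_inj j j' (neg_injective h))]
    rw [← Finset.sum_add_distrib]
    refine Finset.sum_congr rfl (fun j _ => ?_)
    rw [hodd (zs j), b_neg_left]
    exact ifcomb (b (zs j) β) (f (zs j))
  have HRall : ∀ k : Fin 40, (∑ j : Fin 40, ((Rmat k j : ℤ) : ℂ) * f (zs j)) = 0 := by
    intro k
    by_cases h : (k : ℕ) < 30
    · have := (conv (bs ⟨k.1, h⟩)).symm.trans (hrow (bs ⟨k.1, h⟩) (qbs ⟨k.1, h⟩))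
      rw [← this]
      refine Finset.sum_congr rfl (fun j _ => ?_)
      rw [Rmat, dif_pos h]
    · have hk : (k : ℕ) - 30 < 10 := by omega
      rw [Finset.sum_eq_single (pt ⟨(k : ℕ) - 30, hk⟩)]
      · rw [Rmat, dif_neg h]
        rw [if_pos (show ((pt ⟨(k : ℕ) - 30, hk⟩ : Fin 40) : ℕ) = (k : ℕ) - 30 from rfl),
          hvan ⟨(k : ℕ) - 30, hk⟩, mul_zero]
      · intro j _ hj
        rw [Rmat, dif_neg h, if_neg, Int.cast_zero, zero_mul]
        intro hc
        apply hj
        apply Fin.ext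
        exact hc
      · intro hmem; exact absurd (Finset.mem_univ _) hmem
  have fzs : ∀ j0 : Fin 40, f (zs j0) = 0 := by
    intro j0
    have key : (∑ k : Fin 40, ((Ncert j0 k : ℤ) : ℂ) *
        (∑ j : Fin 40, ((Rmat k j : ℤ) : ℂ) * f (zs j))) = 0 := by
      refine Finset.sum_eq_zero (fun k _ => ?_)
      rw [HRall k, mul_zero]
    have swap : (∑ k : Fin 40, ((Ncert j0 k : ℤ) : ℂ) *
        (∑ j : Fin 40, ((Rmat k j : ℤ) : ℂ) * f (zs j)))
        = ∑ j : Fin 40, ((∑ k : Fin 40, Ncert j0 k * Rmat k j : ℤ) : ℂ) * f (zs j) := by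
      simp only [Finset.mul_sum]
      rw [Finset.sum_comm]
      refine Finset.sum_congr rfl (fun j _ => ?_)
      push_cast
      rw [Finset.sum_mul]
      exact Finset.sum_congr rfl (fun k _ => by ring)
    rw [swap] at key
    have key2 : (∑ j : Fin 40, ((if j = j0 then dcert j0 else 0 : ℤ) : ℂ) * f (zs j)) = 0 := by
      rw [← key]
      exact Finset.sum_congr rfl (fun j _ => by rw [cert1 j0 j])
    have step3 : (∑ j : Fin 40, ((if j = j0 then dcert j0 else 0 : ℤ) : ℂ) * f (zs j))
        = ∑ j : Fin 40, if j = j0 then ((dcert j0 : ℤ) : ℂ) * f (zs j) else 0 :=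
      Finset.sum_congr rfl (fun j _ => by
        rw [apply_ite (fun z : ℤ => (z : ℂ)), Int.cast_zero, ite_mul, zero_mul])
    rw [step3, Finset.sum_ite_eq' Finset.univ j0, if_pos (Finset.mem_univ j0)] at key2
    rcases mul_eq_zero.mp key2 with h | h
    · exact absurd (Int.cast_injective (h.trans Int.cast_zero.symm)) (dcert_ne j0)
    · exact h
  funext α
  show f α = (0 : V → ℂ) α
  rw [Pi.zero_apply]
  by_cases hq : q α = 0
  · rcases zcover α hq with h | ⟨j, h | h⟩
    · rw [h, f0]
    · rw [← h, fzs j]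
    · have : α = - zs j := by rw [h, neg_neg]
      rw [this, hodd (zs j), fzs j, neg_zero]
  · exact hsupp α hq

/-! ### the ten explicit cross functions -/

noncomputable def T (i : Fin 10) : V → ℂ := fun α => sgn (∏ l, b α (as i l))

lemma T_mem : ∀ i : Fin 10, T i ∈ crossFunctions := by
  intro i
  refine ⟨as i, ?_, ?_, ?_, rfl⟩
  · revert i; decide
  · revert i; decide
  · revert i; decide

lemma T_val (i j : Fin 10) : T i (zs (pt j)) = ((Az i j : ℤ) : ℂ) := by
  rw [T, Az, sgn_eq]

set_option maxRecDepth 100000 in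
set_option maxHeartbeats 8000000 in
lemma cert2 : ∀ i0 i : Fin 10,
    (∑ j : Fin 10, Bcert i0 j * Az i j) = if i = i0 then ecert i0 else 0 := by decide

lemma ecert_ne : ∀ i0 : Fin 10, ecert i0 ≠ 0 := by decide

lemma T_indep : LinearIndependent ℂ T := by
  rw [Fintype.linearIndependent_iff]
  intro g hg i0
  have hval : ∀ j : Fin 10, (∑ i : Fin 10, g i * ((Az i j : ℤ) : ℂ)) = 0 := by
    intro j
    have := congrFun hg (zs (pt j))
    simp only [Finset.sum_apply, Pi.zero_apply] at this
    rw [← this]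
    refine Finset.sum_congr rfl (fun i _ => ?_)
    rw [Pi.smul_apply, smul_eq_mul, T_val]
  have key : (∑ j : Fin 10, ((Bcert i0 j : ℤ) : ℂ) *
      (∑ i : Fin 10, g i * ((Az i j : ℤ) : ℂ))) = 0 :=
    Finset.sum_eq_zero (fun j _ => by rw [hval j, mul_zero])
  have swap : (∑ j : Fin 10, ((Bcert i0 j : ℤ) : ℂ) *
      (∑ i : Fin 10, g i * ((Az i j : ℤ) : ℂ)))
      = ∑ i : Fin 10, g i * ((∑ j : Fin 10, Bcert i0 j * Az i j : ℤ) : ℂ) := by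
    simp only [Finset.mul_sum]
    rw [Finset.sum_comm]
    refine Finset.sum_congr rfl (fun i _ => ?_)
    push_cast
    rw [Finset.mul_sum]
    exact Finset.sum_congr rfl (fun j _ => by ring)
  rw [swap] at key
  have key2 : (∑ i : Fin 10, g i * ((if i = i0 then ecert i0 else 0 : ℤ) : ℂ)) = 0 := by
    rw [← key]
    exact Finset.sum_congr rfl (fun i _ => by rw [cert2 i0 i])
  have step3 : (∑ i : Fin 10, g i * ((if i = i0 then ecert i0 else 0 : ℤ) : ℂ))
      = ∑ i : Fin 10, if i = i0 then g i * ((ecert i0 : ℤ) : ℂ) else 0 :=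
    Finset.sum_congr rfl (fun i _ => by
      rw [apply_ite (fun z : ℤ => (z : ℂ)), Int.cast_zero, mul_ite, mul_zero])
  rw [step3, Finset.sum_ite_eq' Finset.univ i0, if_pos (Finset.mem_univ i0)] at key2
  rcases mul_eq_zero.mp key2 with h | h
  · exact h
  · exact absurd (Int.cast_injective (h.trans Int.cast_zero.symm)) (ecert_ne i0)

/-! ### main theorem -/

theorem stmt15 : Module.finrank ℂ (Submodule.span ℂ crossFunctions) = 10 := by
  have hupper : Module.finrank ℂ (Submodule.span ℂ crossFunctions) ≤ 10 := by
    have hle : Submodule.span ℂ crossFunctions ≤ WSub :=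
      Submodule.span_le.mpr (fun C hC => cross_mem hC)
    have hW : Module.finrank ℂ WSub ≤ 10 := by
      let E : (V → ℂ) →ₗ[ℂ] (Fin 10 → ℂ) :=
        LinearMap.pi (fun i => LinearMap.proj (zs (pt i)))
      have hinj : Function.Injective (E.comp WSub.subtype) := by
        rw [← LinearMap.ker_eq_bot, LinearMap.ker_eq_bot']
        intro ⟨f, hf⟩ hEf
        have hvan : ∀ i : Fin 10, f (zs (pt i)) = 0 := by
          intro i
          exact congrFun hEf i
        exact Subtype.ext (Wuniq f hf hvan)
      have := LinearMap.finrank_le_finrank_of_injective hinj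
      rwa [Module.finrank_fintype_fun_eq_card, Fintype.card_fin] at this
    exact le_trans (Submodule.finrank_mono hle) hW
  have hlower : 10 ≤ Module.finrank ℂ (Submodule.span ℂ crossFunctions) := by
    have hspan : Submodule.span ℂ (Set.range T) ≤ Submodule.span ℂ crossFunctions :=
      Submodule.span_mono (Set.range_subset_iff.mpr T_mem)
    have hcard : Module.finrank ℂ (Submodule.span ℂ (Set.range T)) = 10 := by
      rw [finrank_span_eq_card T_indep, Fintype.card_fin]
    rw [← hcard]
    exact Submodule.finrank_mono hspan
  omega
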